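/- arXiv:2105.05364 — 2 statements merged into one kernel-verified Lean document; each statement's English description precedes it below -/
import Mathlib

section
/- Let a ∈ ℝ and let u : ℝ → ℝ be infinitely differentiable on a neighborhood of a. Define the scaled Taylor coefficients U_k = u^{(k)}(a)/k!, S_k = (sin ∘ u)^{(k)}(a)/k!, and C_k = (cos ∘ u)^{(k)}(a)/k!. Then for every k ≥ 1 the following recursions hold: k·S_k = Σ_{j=1}^{k} j·U_j·C_{k−j} and k·C_k = −Σ_{j=1}^{k} j·U_j·S_{k−j}. In particular, S_k = C_0·U_k + (1/k)Σ_{j=1}^{k−1} j·U_j·C_{k−j} and C_k = −S_0·U_k − (1/k)Σ_{j=1}^{k−1} j·U_j·S_{k−j}, with S_0 = sin(u(a)) and C_0 = cos(u(a)). -/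
open Finset

/-- On an open set, `iteratedDerivWithin` equals `iteratedDeriv`. -/
private lemma myIteratedDerivWithin_of_isOpen {t : Set ℝ} (ht : IsOpen t) {f : ℝ → ℝ} (n : ℕ)
    {x : ℝ} (hx : x ∈ t) : iteratedDerivWithin n f t x = iteratedDeriv n f x := by
  rw [iteratedDerivWithin_eq_iteratedFDerivWithin, iteratedDeriv_eq_iteratedFDeriv,
    iteratedFDerivWithin_of_isOpen n ht hx]

private lemma myDiffAt {t : Set ℝ} (ht : IsOpen t) {f : ℝ → ℝ}
    (hf : ContDiffOn ℝ ((⊤ : ℕ∞) : WithTop ℕ∞) f t) (n : ℕ) {x : ℝ} (hx : x ∈ t) :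
    DifferentiableAt ℝ (iteratedDeriv n f) x := by
  have h1 : DifferentiableOn ℝ (iteratedDerivWithin n f t) t :=
    hf.differentiableOn_iteratedDerivWithin (by exact_mod_cast WithTop.coe_lt_top _)
      ht.uniqueDiffOn
  have h2 : Set.EqOn (iteratedDerivWithin n f t) (iteratedDeriv n f) t :=
    fun y hy => myIteratedDerivWithin_of_isOpen ht n hy
  exact ((h1 x hx).congr (fun y hy => (h2 hy).symm) ((h2 hx).symm)).differentiableAt
    (ht.mem_nhds hx)

private lemma myHasDerivAt {t : Set ℝ} (ht : IsOpen t) {f : ℝ → ℝ}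
    (hf : ContDiffOn ℝ ((⊤ : ℕ∞) : WithTop ℕ∞) f t) (n : ℕ) {x : ℝ} (hx : x ∈ t) :
    HasDerivAt (iteratedDeriv n f) (iteratedDeriv (n + 1) f x) x := by
  rw [iteratedDeriv_succ]
  exact (myDiffAt ht hf n hx).hasDerivAt

/-- Leibniz formula for iterated derivatives of a product, on an open set. -/
private lemma myLeibniz {t : Set ℝ} (ht : IsOpen t) {f g : ℝ → ℝ}
    (hf : ContDiffOn ℝ ((⊤ : ℕ∞) : WithTop ℕ∞) f t)
    (hg : ContDiffOn ℝ ((⊤ : ℕ∞) : WithTop ℕ∞) g t) (n : ℕ) :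
    ∀ {x : ℝ}, x ∈ t → iteratedDeriv n (fun y => f y * g y) x =
      ∑ i ∈ range (n + 1), (n.choose i : ℝ) * iteratedDeriv i f x * iteratedDeriv (n - i) g x := by
  induction n with
  | zero => intro x _; simp
  | succ n ih =>
    intro x hx
    rw [iteratedDeriv_succ]
    have hEq : Set.EqOn (iteratedDeriv n (fun y => f y * g y))
        (fun y => ∑ i ∈ range (n + 1),
          (n.choose i : ℝ) * iteratedDeriv i f y * iteratedDeriv (n - i) g y) t :=
      fun y hy => ih hy
    rw [Filter.EventuallyEq.deriv_eq (hEq.eventuallyEq_of_mem (ht.mem_nhds hx))]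
    have H : HasDerivAt (fun y => ∑ i ∈ range (n + 1),
          (n.choose i : ℝ) * iteratedDeriv i f y * iteratedDeriv (n - i) g y)
        (∑ i ∈ range (n + 1), (n.choose i : ℝ) *
          (iteratedDeriv (i + 1) f x * iteratedDeriv (n - i) g x +
           iteratedDeriv i f x * iteratedDeriv (n - i + 1) g x)) x := by
      refine HasDerivAt.fun_sum (fun i _ => ?_)
      have h1 := (myHasDerivAt ht hf i hx).mul (myHasDerivAt ht hg (n - i) hx)
      have h2 := h1.const_mul ((n.choose i : ℝ))
      simpa [mul_assoc, mul_comm, mul_left_comm] using h2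
    rw [H.deriv]
    set F : ℕ → ℝ := fun i => iteratedDeriv i f x
    set G : ℕ → ℝ := fun i => iteratedDeriv i g x
    have key : ∑ i ∈ range (n + 1), (n.choose i : ℝ) *
          (F (i + 1) * G (n - i) + F i * G (n - i + 1)) =
        ∑ i ∈ range (n + 2), ((n + 1).choose i : ℝ) * F i * G (n + 1 - i) := by
      rw [Finset.sum_range_succ' (fun i => ((n + 1).choose i : ℝ) * F i * G (n + 1 - i)) (n + 1)]
      simp only [Nat.choose_succ_succ, Nat.choose_zero_right, Nat.cast_one, one_mul,
        Nat.cast_add]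
      have e1 : ∑ i ∈ range (n + 1), ((n.choose i : ℝ) + (n.choose (i + 1) : ℝ)) * F (i + 1) *
            G (n + 1 - (i + 1)) =
          ∑ i ∈ range (n + 1), ((n.choose i : ℝ) * F (i + 1) * G (n - i) +
            (n.choose (i + 1) : ℝ) * F (i + 1) * G (n - i)) := by
        refine Finset.sum_congr rfl fun i hi => ?_
        have : n + 1 - (i + 1) = n - i := by omega
        rw [this]; ring
      rw [e1, Finset.sum_add_distrib]
      have e2 : ∑ i ∈ range (n + 1), (n.choose (i + 1) : ℝ) * F (i + 1) * G (n - i) =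
          ∑ i ∈ range n, (n.choose (i + 1) : ℝ) * F (i + 1) * G (n - i) := by
        rw [Finset.sum_range_succ, Nat.choose_succ_self]; simp
      have e3 : ∑ i ∈ range (n + 1), (n.choose i : ℝ) * (F (i + 1) * G (n - i) +
            F i * G (n - i + 1)) =
          ∑ i ∈ range (n + 1), (n.choose i : ℝ) * F (i + 1) * G (n - i) +
          ∑ i ∈ range (n + 1), (n.choose i : ℝ) * F i * G (n - i + 1) := by
        rw [← Finset.sum_add_distrib]; refine Finset.sum_congr rfl fun i hi => ?_; ring
      rw [e3]
      have e4 : ∑ i ∈ range (n + 1), (n.choose i : ℝ) * F i * G (n - i + 1) =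
          ∑ i ∈ range n, (n.choose (i + 1) : ℝ) * F (i + 1) * G (n - i) + F 0 * G (n + 1) := by
        rw [Finset.sum_range_succ' (fun i => (n.choose i : ℝ) * F i * G (n - i + 1)) n]
        congr 1
        · refine Finset.sum_congr rfl fun i hi => ?_
          have : n - (i + 1) + 1 = n - i := by
            have := Finset.mem_range.mp hi; omega
          rw [this]
        · simp
      rw [e2, e4]; simp only [Nat.sub_zero]; ring
    exact key

/-- Convolution formula for scaled Taylor coefficients of `q · w'`. -/
private lemma myKey {t : Set ℝ} (ht : IsOpen t) {q w : ℝ → ℝ}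
    (hq : ContDiffOn ℝ ((⊤ : ℕ∞) : WithTop ℕ∞) q t)
    (hw : ContDiffOn ℝ ((⊤ : ℕ∞) : WithTop ℕ∞) w t) {a : ℝ} (ha : a ∈ t) (m : ℕ) :
    iteratedDeriv m (fun y => q y * deriv w y) a / (Nat.factorial m : ℝ) =
      ∑ j ∈ Icc 1 (m + 1), (j : ℝ) * (iteratedDeriv j w a / (Nat.factorial j : ℝ)) *
        (iteratedDeriv (m + 1 - j) q a / (Nat.factorial (m + 1 - j) : ℝ)) := by
  have hw' : ContDiffOn ℝ ((⊤ : ℕ∞) : WithTop ℕ∞) (deriv w) t :=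
    hw.deriv_of_isOpen ht (by simp)
  rw [myLeibniz ht hq hw' m ha, ← Finset.Ico_add_one_right_eq_Icc, Finset.sum_Ico_eq_sum_range]
  simp only [show m + 1 + 1 - 1 = m + 1 from rfl]
  rw [← Finset.sum_range_reflect, Finset.sum_div]
  refine Finset.sum_congr rfl fun i hi => ?_
  have him : i ≤ m := by simpa [Nat.lt_succ_iff] using hi
  rw [show m + 1 - 1 - i = m - i from by omega,
      show m - (m - i) = i from by omega,
      show 1 + i = i + 1 from by omega,
      show m + 1 - (i + 1) = m - i from by omega,
      iteratedDeriv_succ', Nat.choose_symm him]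
  have hn : m.choose i * ((i + 1).factorial * (m - i).factorial) =
      (i + 1) * m.factorial := by
    have h := Nat.choose_mul_factorial_mul_factorial him
    rw [Nat.factorial_succ, ← h]; ring
  have hcast : (m.choose i : ℝ) * (((i + 1).factorial : ℝ) * ((m - i).factorial : ℝ)) =
      ((i + 1 : ℕ) : ℝ) * (m.factorial : ℝ) := by exact_mod_cast hn
  have hfm : (m.factorial : ℝ) ≠ 0 := Nat.cast_ne_zero.mpr m.factorial_ne_zero
  have hf1 : ((i + 1).factorial : ℝ) ≠ 0 := Nat.cast_ne_zero.mpr (i + 1).factorial_ne_zero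
  have hf2 : ((m - i).factorial : ℝ) ≠ 0 := Nat.cast_ne_zero.mpr (m - i).factorial_ne_zero
  field_simp
  push_cast [him] at hcast ⊢
  linear_combination iteratedDeriv (m - i) q a * iteratedDeriv i (deriv w) a * hcast

/-- If `u` is smooth on a neighborhood of `a` then the scaled Taylor coefficients
`U_k = u⁽ᵏ⁾(a)/k!`, `S_k = (sin∘u)⁽ᵏ⁾(a)/k!`, `C_k = (cos∘u)⁽ᵏ⁾(a)/k!` satisfy,
for every `k ≥ 1`, the recursions `k·S_k = ∑_{j=1}^{k} j·U_j·C_{k-j}` and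
`k·C_k = -∑_{j=1}^{k} j·U_j·S_{k-j}`; in particular
`S_k = C_0·U_k + (1/k)∑_{j=1}^{k-1} j·U_j·C_{k-j}` and
`C_k = -S_0·U_k - (1/k)∑_{j=1}^{k-1} j·U_j·S_{k-j}`, with
`S_0 = sin(u a)` and `C_0 = cos(u a)`. -/
theorem sin_cos_comp_scaled_taylor_coeff_recursion
    (a : ℝ) (s : Set ℝ) (hs : s ∈ nhds a)
    (u : ℝ → ℝ) (hu : ContDiffOn ℝ (⊤ : ℕ∞) u s)
    (U S C : ℕ → ℝ)
    (hU : ∀ k, U k = iteratedDeriv k u a / (Nat.factorial k))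
    (hS : ∀ k, S k = iteratedDeriv k (fun x => Real.sin (u x)) a / (Nat.factorial k))
    (hC : ∀ k, C k = iteratedDeriv k (fun x => Real.cos (u x)) a / (Nat.factorial k)) :
    S 0 = Real.sin (u a) ∧ C 0 = Real.cos (u a) ∧
      ∀ k : ℕ, 1 ≤ k →
        ((k : ℝ) * S k = ∑ j ∈ Finset.Icc 1 k, (j : ℝ) * U j * C (k - j)) ∧
        ((k : ℝ) * C k = -∑ j ∈ Finset.Icc 1 k, (j : ℝ) * U j * S (k - j)) ∧
        (S k = C 0 * U k + (1 / (k : ℝ)) * ∑ j ∈ Finset.Icc 1 (k - 1), (j : ℝ) * U j * C (k - j)) ∧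
        (C k = -(S 0 * U k) - (1 / (k : ℝ)) * ∑ j ∈ Finset.Icc 1 (k - 1), (j : ℝ) * U j * S (k - j)) := by
  set t := interior s with ht_def
  have ht : IsOpen t := isOpen_interior
  have hat : a ∈ t := mem_interior_iff_mem_nhds.mpr hs
  have hu' : ContDiffOn ℝ ((⊤ : ℕ∞) : WithTop ℕ∞) u t :=
    (hu.mono interior_subset).of_le (by simp)
  have hfs : ContDiffOn ℝ ((⊤ : ℕ∞) : WithTop ℕ∞) (fun x => Real.sin (u x)) t :=
    Real.contDiff_sin.comp_contDiffOn hu'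
  have hfc : ContDiffOn ℝ ((⊤ : ℕ∞) : WithTop ℕ∞) (fun x => Real.cos (u x)) t :=
    Real.contDiff_cos.comp_contDiffOn hu'
  have hfns : ContDiffOn ℝ ((⊤ : ℕ∞) : WithTop ℕ∞) (fun x => -Real.sin (u x)) t := hfs.neg
  have hud : ∀ y ∈ t, DifferentiableAt ℝ u y := fun y hy =>
    ((hu'.differentiableOn (by simp)) y hy).differentiableAt (ht.mem_nhds hy)
  have hdf : Set.EqOn (deriv (fun x => Real.sin (u x)))
      (fun y => Real.cos (u y) * deriv u y) t := by
    intro y hy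
    have h := ((Real.hasDerivAt_sin (u y)).comp y (hud y hy).hasDerivAt).deriv
    simpa [Function.comp_def] using h
  have hdg : Set.EqOn (deriv (fun x => Real.cos (u x)))
      (fun y => (-Real.sin (u y)) * deriv u y) t := by
    intro y hy
    have h := ((Real.hasDerivAt_cos (u y)).comp y (hud y hy).hasDerivAt).deriv
    simpa [Function.comp_def] using h
  refine ⟨by simp [hS], by simp [hC], fun k hk => ?_⟩
  obtain ⟨m, rfl⟩ : ∃ m, k = m + 1 := ⟨k - 1, by omega⟩
  have hfac : ((m + 1 : ℕ).factorial : ℝ) = ((m : ℝ) + 1) * (m.factorial : ℝ) := by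
    rw [Nat.factorial_succ]; push_cast; ring
  have hfm : (m.factorial : ℝ) ≠ 0 := Nat.cast_ne_zero.mpr m.factorial_ne_zero
  -- first recursion
  have hS1 : ((m + 1 : ℕ) : ℝ) * S (m + 1) =
      ∑ j ∈ Finset.Icc 1 (m + 1), (j : ℝ) * U j * C (m + 1 - j) := by
    rw [hS]
    have e0 : ((m + 1 : ℕ) : ℝ) * (iteratedDeriv (m + 1) (fun x => Real.sin (u x)) a /
        ((m + 1 : ℕ).factorial : ℝ)) =
        iteratedDeriv (m + 1) (fun x => Real.sin (u x)) a / (m.factorial : ℝ) := by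
      rw [hfac]; push_cast; field_simp
    rw [e0, iteratedDeriv_succ',
      hdf.iteratedDeriv_of_isOpen ht m hat, myKey ht hfc hu' hat m]
    exact Finset.sum_congr rfl fun j hj => by rw [hU, hC]
  have hC1 : ((m + 1 : ℕ) : ℝ) * C (m + 1) =
      -∑ j ∈ Finset.Icc 1 (m + 1), (j : ℝ) * U j * S (m + 1 - j) := by
    rw [hC]
    have e0 : ((m + 1 : ℕ) : ℝ) * (iteratedDeriv (m + 1) (fun x => Real.cos (u x)) a /
        ((m + 1 : ℕ).factorial : ℝ)) =
        iteratedDeriv (m + 1) (fun x => Real.cos (u x)) a / (m.factorial : ℝ) := by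
      rw [hfac]; push_cast; field_simp
    rw [e0, iteratedDeriv_succ',
      hdg.iteratedDeriv_of_isOpen ht m hat, myKey ht hfns hu' hat m,
      ← Finset.sum_neg_distrib]
    refine Finset.sum_congr rfl fun j hj => ?_
    rw [hU, hS, iteratedDeriv_fun_neg]
    ring
  have hk0 : ((m + 1 : ℕ) : ℝ) ≠ 0 := by push_cast; positivity
  have hsplit : ∀ T : ℕ → ℝ, ∑ j ∈ Finset.Icc 1 (m + 1), T j =
      ∑ j ∈ Finset.Icc 1 m, T j + T (m + 1) := by
    intro T
    rw [show Finset.Icc 1 (m + 1) = insert (m + 1) (Finset.Icc 1 m) from by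
      ext x; simp [Nat.lt_succ_iff]; omega, Finset.sum_insert (by simp)]
    ring
  refine ⟨hS1, hC1, ?_, ?_⟩
  · have h1 := hS1
    rw [hsplit] at h1
    simp only [Nat.add_sub_cancel, Nat.sub_self] at h1 ⊢
    have : S (m + 1) = (((m + 1 : ℕ) : ℝ) * S (m + 1)) / ((m + 1 : ℕ) : ℝ) := by
      field_simp
    rw [this, h1]
    field_simp
    ring
  · have h1 := hC1
    rw [hsplit] at h1
    simp only [Nat.add_sub_cancel, Nat.sub_self] at h1 ⊢
    have : C (m + 1) = (((m + 1 : ℕ) : ℝ) * C (m + 1)) / ((m + 1 : ℕ) : ℝ) := by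
      field_simp
    rw [this, h1]
    field_simp
    ring
end

section
/- For every real number x with |x| < 1, the series Σ_{k=0}^{∞} (−1)^{k+1}·C(2k, k)·(x² − 1)^k / (4^k·(2k − 1)) converges and its sum equals |x| (in the sense of HasSum). Here C(2k, k) denotes the central binomial coefficient, and the k = 0 term equals 1 since 2·0 − 1 = −1. -/
open Finset

/-- The coefficient of the series. -/
noncomputable def ccoef (k : ℕ) : ℝ :=
  (-1 : ℝ) ^ (k + 1) * (Nat.centralBinom k : ℝ) / ((4 : ℝ) ^ k * (2 * (k : ℝ) - 1))

lemma centralBinom_succ_eq (j : ℕ) :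
    Nat.centralBinom (j + 1) = 2 * (2 * j + 1) * catalan j := by
  have h1 := Nat.succ_mul_centralBinom_succ j
  have h2 := succ_mul_catalan_eq_centralBinom j
  have : (j + 1) * Nat.centralBinom (j + 1) = (j + 1) * (2 * (2 * j + 1) * catalan j) := by
    rw [h1, ← h2]; ring
  exact Nat.eq_of_mul_eq_mul_left (Nat.succ_pos j) this

lemma ccoef_zero : ccoef 0 = 1 := by
  norm_num [ccoef, Nat.centralBinom]

lemma ccoef_succ (j : ℕ) : ccoef (j + 1) = (-1 : ℝ) ^ j * catalan j / (2 * 4 ^ j) := by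
  rw [ccoef, centralBinom_succ_eq]
  push_cast
  rw [show (2 * ((j : ℝ) + 1) - 1) = 2 * (j : ℝ) + 1 from by ring]
  rw [div_eq_div_iff (by positivity) (by positivity)]
  ring

lemma abs_ccoef_succ (j : ℕ) : |ccoef (j + 1)| = catalan j / (2 * 4 ^ j) := by
  rw [ccoef_succ, abs_div, abs_mul, abs_pow, abs_neg, abs_one, one_pow, one_mul]
  rw [abs_of_nonneg (by positivity : (0:ℝ) ≤ Nat.cast (catalan j)),
    abs_of_nonneg (by positivity : (0:ℝ) ≤ 2 * 4 ^ j)]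

/-- Telescoping majorant. -/
noncomputable def Btel (j : ℕ) : ℝ := (j + 1) * catalan j / 4 ^ j

lemma Btel_step (j : ℕ) : Btel j - Btel (j + 1) = catalan j / (2 * 4 ^ j) := by
  have key : (j + 1 + 1) * catalan (j + 1) = 2 * (2 * j + 1) * catalan j := by
    rw [succ_mul_catalan_eq_centralBinom, centralBinom_succ_eq]
  have keyR : ((j : ℝ) + 1 + 1) * catalan (j + 1) = 2 * (2 * (j : ℝ) + 1) * catalan j := by
    exact_mod_cast congrArg (Nat.cast : ℕ → ℝ) key
  have hB1 : Btel (j + 1) = (2 * (j : ℝ) + 1) * catalan j / (2 * 4 ^ j) := by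
    rw [Btel]
    push_cast
    rw [pow_succ, div_eq_div_iff (by positivity) (by positivity)]
    linear_combination (2 * (4 : ℝ) ^ j) * keyR
  have h4 : ((4 : ℝ) ^ j) ≠ 0 := by positivity
  rw [hB1, Btel]
  field_simp
  ring

lemma sum_abs_ccoef_le (n : ℕ) : ∑ j ∈ range n, |ccoef (j + 1)| ≤ 1 := by
  have : ∑ j ∈ range n, |ccoef (j + 1)| = Btel 0 - Btel n := by
    rw [← Finset.sum_range_sub' Btel n]
    exact Finset.sum_congr rfl fun j _ => by rw [abs_ccoef_succ, Btel_step]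
  rw [this]
  have h0 : Btel 0 = 1 := by norm_num [Btel]
  have hn : 0 ≤ Btel n := by unfold Btel; positivity
  linarith

lemma summable_abs_ccoef_succ : Summable fun j => |ccoef (j + 1)| :=
  summable_of_sum_range_le (fun _ => abs_nonneg _) sum_abs_ccoef_le

lemma tsum_abs_ccoef_succ_le : ∑' j, |ccoef (j + 1)| ≤ 1 :=
  Real.tsum_le_of_sum_range_le (fun _ => abs_nonneg _) sum_abs_ccoef_le

lemma summable_abs_ccoef : Summable fun k => |ccoef k| :=
  (summable_nat_add_iff 1).mp summable_abs_ccoef_succ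

/-- The key convolution identity. -/
lemma conv_ccoef (n : ℕ) :
    ∑ k ∈ range (n + 1), ccoef k * ccoef (n - k) = if n ≤ 1 then 1 else 0 := by
  match n with
  | 0 => simp [ccoef_zero]
  | 1 =>
    rw [Finset.sum_range_succ, Finset.sum_range_one]
    norm_num [ccoef_zero, ccoef_succ, catalan_zero]
  | (m + 2) =>
    rw [Finset.sum_range_succ, Finset.sum_range_succ']
    have hmid : ∀ i ∈ range (m + 1),
        ccoef (i + 1) * ccoef (m + 2 - (i + 1)) =
          ((-1 : ℝ) ^ m / (4 * 4 ^ m)) * ((catalan i : ℝ) * catalan (m - i)) := by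
      intro i hi
      have him : i ≤ m := by simpa using Nat.lt_succ_iff.mp (Finset.mem_range.mp hi)
      have h1 : m + 2 - (i + 1) = (m - i) + 1 := by omega
      rw [h1, ccoef_succ, ccoef_succ]
      have hpm : (-1 : ℝ) ^ i * (-1 : ℝ) ^ (m - i) = (-1 : ℝ) ^ m := by
        rw [← pow_add]; congr 1; omega
      have h4m : (4 : ℝ) ^ i * (4 : ℝ) ^ (m - i) = (4 : ℝ) ^ m := by
        rw [← pow_add]; congr 1; omega
      rw [div_mul_div_comm, div_mul_eq_mul_div]
      congr 1
      · rw [show (-1 : ℝ) ^ i * (catalan i : ℝ) * ((-1 : ℝ) ^ (m - i) * (catalan (m - i) : ℝ))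
              = ((-1 : ℝ) ^ i * (-1 : ℝ) ^ (m - i)) * ((catalan i : ℝ) * (catalan (m - i) : ℝ))
            from by ring, hpm]
      · rw [show (2 * (4 : ℝ) ^ i) * (2 * (4 : ℝ) ^ (m - i))
              = 4 * ((4 : ℝ) ^ i * (4 : ℝ) ^ (m - i)) from by ring, h4m]
    rw [Finset.sum_congr rfl hmid, ← Finset.mul_sum]
    have hcat : ((catalan (m + 1) : ℝ)) = ∑ i ∈ range (m + 1), (catalan i : ℝ) * catalan (m - i) := by
      rw_mod_cast [catalan_succ]
      push_cast [Finset.sum_range]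
      rfl
    rw [← hcat]
    simp only [Nat.sub_zero, Nat.sub_self]
    have hc2 : ccoef (m + 2) = (-1 : ℝ) ^ (m + 1) * catalan (m + 1) / (2 * 4 ^ (m + 1)) :=
      ccoef_succ (m + 1)
    rw [ccoef_zero, hc2, if_neg (by omega)]
    have h4m : ((4 : ℝ) ^ m) ≠ 0 := by positivity
    rw [pow_succ, pow_succ]
    field_simp
    ring

/-- For `|x| < 1`, the generalized binomial series
`∑_{k=0}^∞ (-1)^{k+1}·C(2k,k)·(x²-1)^k / (4^k·(2k-1))` has sum `|x|`.
(The `k = 0` term equals `1` since `2·0 - 1 = -1`.) -/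
theorem hasSum_centralBinom_series_abs (x : ℝ) (hx : |x| < 1) :
    HasSum
      (fun k : ℕ =>
        (-1 : ℝ) ^ (k + 1) * (Nat.centralBinom k : ℝ) * (x ^ 2 - 1) ^ k /
          ((4 : ℝ) ^ k * (2 * (k : ℝ) - 1)))
      |x| := by
  set t : ℝ := x ^ 2 - 1 with ht_def
  have hx2 : x ^ 2 < 1 := by
    have := abs_lt.mp hx
    nlinarith
  have hx2' : (0 : ℝ) ≤ x ^ 2 := sq_nonneg x
  have ht_abs : |t| = 1 - x ^ 2 := by
    rw [ht_def, abs_of_nonpos (by linarith)]; ring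
  have ht1 : |t| ≤ 1 := by rw [ht_abs]; linarith
  set f : ℕ → ℝ := fun k => ccoef k * t ^ k with hf_def
  -- summability of the norms
  have hnorm : Summable fun k => ‖f k‖ := by
    apply Summable.of_nonneg_of_le (fun k => norm_nonneg _) _ summable_abs_ccoef
    intro k
    rw [hf_def]
    simp only [Real.norm_eq_abs, abs_mul, abs_pow]
    calc |ccoef k| * |t| ^ k ≤ |ccoef k| * 1 := by
          apply mul_le_mul_of_nonneg_left _ (abs_nonneg _)
          exact pow_le_one₀ (abs_nonneg t) ht1
      _ = |ccoef k| := mul_one _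
  have hsumf : Summable f := hnorm.of_norm
  set g : ℝ := ∑' k, f k with hg_def
  have hg : HasSum f g := hsumf.hasSum
  -- Cauchy product: g * g = 1 + t
  have hcauchy : HasSum (fun n => ∑ k ∈ range (n + 1), f k * f (n - k)) (g * g) :=
    hasSum_sum_range_mul_of_summable_norm hnorm hnorm
  have hconv : ∀ n, ∑ k ∈ range (n + 1), f k * f (n - k) =
      (if n ≤ 1 then (1 : ℝ) else 0) * t ^ n := by
    intro n
    rw [← conv_ccoef n, Finset.sum_mul]
    apply Finset.sum_congr rfl
    intro k hk
    have hkn : k ≤ n := Nat.lt_succ_iff.mp (Finset.mem_range.mp hk)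
    rw [hf_def]
    have : t ^ k * t ^ (n - k) = t ^ n := by rw [← pow_add]; congr 1; omega
    calc ccoef k * t ^ k * (ccoef (n - k) * t ^ (n - k))
        = ccoef k * ccoef (n - k) * (t ^ k * t ^ (n - k)) := by ring
      _ = ccoef k * ccoef (n - k) * t ^ n := by rw [this]
  have honept : HasSum (fun n => (if n ≤ 1 then (1 : ℝ) else 0) * t ^ n) (1 + t) := by
    have h1 : (1 : ℝ) + t = ∑ n ∈ range 2, (if n ≤ 1 then (1 : ℝ) else 0) * t ^ n := by
      rw [Finset.sum_range_succ, Finset.sum_range_one]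
      norm_num
    rw [h1]
    apply hasSum_sum_of_ne_finset_zero
    intro n hn
    have : ¬ n ≤ 1 := by
      intro h
      exact hn (Finset.mem_range.mpr (by omega))
    rw [if_neg this, zero_mul]
  have hgg : g * g = 1 + t := by
    have := hcauchy
    rw [funext hconv] at this
    exact this.unique honept
  have hgg' : g * g = x ^ 2 := by rw [hgg, ht_def]; ring
  -- positivity: g ≥ 1 - |t| ≥ 0
  have hg_tail : g = f 0 + ∑' k, f (k + 1) := by
    rw [hg_def]; exact Summable.tsum_eq_zero_add hsumf
  have hf0 : f 0 = 1 := by rw [hf_def]; simp [ccoef_zero]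
  have htail_sum : Summable fun k => ‖f (k + 1)‖ := (summable_nat_add_iff 1).mpr hnorm
  have htail_bound : |∑' k, f (k + 1)| ≤ |t| := by
    calc |∑' k, f (k + 1)| ≤ ∑' k, ‖f (k + 1)‖ := norm_tsum_le_tsum_norm htail_sum
      _ ≤ ∑' k, |ccoef (k + 1)| * |t| := by
          apply Summable.tsum_le_tsum _ htail_sum (summable_abs_ccoef_succ.mul_right _)
          intro k
          rw [hf_def]
          simp only [Real.norm_eq_abs, abs_mul, abs_pow]
          have : |t| ^ (k + 1) ≤ |t| := by
            calc |t| ^ (k + 1) = |t| ^ k * |t| := by rw [pow_succ]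
              _ ≤ 1 * |t| := by
                  apply mul_le_mul_of_nonneg_right _ (abs_nonneg t)
                  exact pow_le_one₀ (abs_nonneg t) ht1
              _ = |t| := one_mul _
          exact mul_le_mul_of_nonneg_left this (abs_nonneg _)
      _ = (∑' k, |ccoef (k + 1)|) * |t| := tsum_mul_right
      _ ≤ 1 * |t| := mul_le_mul_of_nonneg_right tsum_abs_ccoef_succ_le (abs_nonneg t)
      _ = |t| := one_mul _
  have hg_nonneg : 0 ≤ g := by
    have h1 : -(|t|) ≤ ∑' k, f (k + 1) := (abs_le.mp htail_bound).1
    rw [hg_tail, hf0, ht_abs] at *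
    linarith
  have hg_eq : g = |x| := by
    have : g = Real.sqrt (g * g) := (Real.sqrt_mul_self hg_nonneg).symm
    rw [this, hgg', Real.sqrt_sq_eq_abs]
  -- conclude
  rw [← hg_eq]
  convert hg using 1
  funext k
  simp only [hf_def, ccoef]
  ring
end
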